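/- Let M be a symmetric irreducible r×r 0–1 transition matrix and let A : Σ̂_M → ℝ be Lipschitz continuous. Suppose β_n → ∞ and β̄_n → ∞ are sequences with φ_{β_n}/β_n → V and φ_{β̄_n}/β̄_n → V̄ uniformly, where φ_β denotes the forward effective potential for βA. Then for every point y ∈ Σ*_M, max_{μ ∈ M_σ} ∫_{Σ_M} ( A(y,x) + V(x) − V(y) ) dμ(x) = max_{μ ∈ M_σ} ∫_{Σ_M} ( A(y,x) + V̄(x) − V̄(y) ) dμ(x). -/

import Mathlib

open MeasureTheory Filter Topology Real

/-- The one-sided subshift of finite type defined by the 0-1 transition matrix `M`: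
sequences `x : ℕ → Fin r` with `M (x j) (x (j+1)) = 1` for all `j`. -/
abbrev Shift (r : ℕ) (M : Fin r → Fin r → Bool) : Type :=
  {x : ℕ → Fin r // ∀ j : ℕ, M (x j) (x (j + 1)) = true}

variable {r : ℕ} {M : Fin r → Fin r → Bool}

/-- The matrix `M` is irreducible: any symbol can be joined to any other by an
admissible path of positive length. -/
def Irred (M : Fin r → Fin r → Bool) : Prop :=
  ∀ i j : Fin r, ∃ n : ℕ, ∃ w : Fin (n + 2) → Fin r,
    w 0 = i ∧ w (Fin.last (n + 1)) = j ∧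
    ∀ k : Fin (n + 1), M (w k.castSucc) (w k.succ) = true

/-- The left shift map on the subshift. -/
def shiftMap (x : Shift r M) : Shift r M :=
  ⟨fun j => x.1 (j + 1), fun j => x.2 (j + 1)⟩

/-- The metric `d(x,y) = Λ^k`, `k = min { j : x_j ≠ y_j }`, `d(x,x) = 0`. -/
noncomputable def shiftDist (Λ : ℝ) (x y : Shift r M) : ℝ :=
  letI := Classical.decEq (Shift r M)
  if h : x = y then 0
  else Λ ^ Nat.find (show ∃ j : ℕ, x.1 j ≠ y.1 j by
    by_contra hc
    push_neg at hc
    exact h (Subtype.ext (funext hc)))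

/-- `φ` is Lipschitz with constant `K` for the metric `shiftDist Λ`. -/
def LipBnd (Λ K : ℝ) (φ : Shift r M → ℝ) : Prop :=
  ∀ x y : Shift r M, |φ x - φ y| ≤ K * shiftDist Λ x y

/-- `φ` is Lipschitz continuous for the metric `shiftDist Λ`. -/
def IsLip (Λ : ℝ) (φ : Shift r M → ℝ) : Prop :=
  ∃ K : ℝ, LipBnd Λ K φ

/-- The best Lipschitz constant of `φ`. -/
noncomputable def lipC (Λ : ℝ) (φ : Shift r M → ℝ) : ℝ :=
  sInf {K : ℝ | 0 ≤ K ∧ LipBnd Λ K φ}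

/-- The uniform norm `‖φ‖₀`. -/
noncomputable def unorm (φ : Shift r M → ℝ) : ℝ :=
  ⨆ x : Shift r M, |φ x|

/-- An observable on the natural extension `Σ̂_M ⊂ Σ*_M × Σ_M` (with `Σ*_M`
canonically identified with `Σ_M`), as a function of `(y, x)`; it is Lipschitz with
constant `K` for the max-metric. -/
def LipBnd2 (Λ K : ℝ) (A : Shift r M → Shift r M → ℝ) : Prop :=
  ∀ y x y' x' : Shift r M,
    |A y x - A y' x'| ≤ K * max (shiftDist Λ y y') (shiftDist Λ x x')

/-- `A` is Lipschitz continuous on `Σ̂_M`. -/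
def IsLip2 (Λ : ℝ) (A : Shift r M → Shift r M → ℝ) : Prop :=
  ∃ K : ℝ, LipBnd2 Λ K A

/-- The best Lipschitz constant of the observable `A`. -/
noncomputable def lipC2 (Λ : ℝ) (A : Shift r M → Shift r M → ℝ) : ℝ :=
  sInf {K : ℝ | 0 ≤ K ∧ LipBnd2 Λ K A}

/-- The uniform norm `‖A‖₀` of the observable. -/
noncomputable def unorm2 (A : Shift r M → Shift r M → ℝ) : ℝ :=
  ⨆ p : Shift r M × Shift r M, |A p.1 p.2|

/-- `μ` is a `σ`-invariant Borel probability measure on the subshift. -/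
def InvProb (μ : Measure (Shift r M)) : Prop :=
  IsProbabilityMeasure μ ∧ μ.map shiftMap = μ

/-- Entropy of the cylinder partition of length `n`:
`H_n(μ) = - ∑_{|w| = n} μ([w]) log μ([w])`. -/
noncomputable def cylEnt (μ : Measure (Shift r M)) (n : ℕ) : ℝ :=
  ∑ w : Fin n → Fin r,
    Real.negMulLog ((μ {x : Shift r M | ∀ i : Fin n, x.1 i.1 = w i}).toReal)

/-- The Kolmogorov–Sinai entropy `h_μ(σ)` of an invariant measure on the subshift:
since the cylinder partition is generating and `n ↦ H_n(μ)` is subadditive,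
`h_μ(σ) = lim_n H_n(μ)/n = inf_n H_n(μ)/n`. -/
noncomputable def entropy (μ : Measure (Shift r M)) : ℝ :=
  ⨅ n : ℕ, cylEnt μ (n + 1) / (n + 1)

/-- The operator
`G⁺_A(φ)(y) = sup_{μ ∈ M_σ} [ ∫ (A(y,x) + φ(x)) dμ(x) + h_μ(σ) ]`. -/
noncomputable def Gplus (A : Shift r M → Shift r M → ℝ)
    (φ : Shift r M → ℝ) (y : Shift r M) : ℝ :=
  sSup {t : ℝ | ∃ μ : Measure (Shift r M), InvProb μ ∧
    t = ∫ x, (A y x + φ x) ∂μ + entropy μ}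

/-- The maximal ergodic average `max_{μ ∈ M_σ} ∫ B dμ`. -/
noncomputable def maxErg (B : Shift r M → ℝ) : ℝ :=
  sSup {t : ℝ | ∃ μ : Measure (Shift r M), InvProb μ ∧ t = ∫ x, B x ∂μ}

/-- The quotient norm on functions modulo additive constants:
`‖g‖_c = inf_{γ ∈ ℝ} ‖g + γ‖₀`. -/
noncomputable def cnorm (g : Shift r M → ℝ) : ℝ :=
  ⨅ γ : ℝ, unorm (fun x => g x + γ)

/-!
Dividing the fixed-point equation `G⁺_{βA}(φ_β) = φ_β + λ_β` by `β = β_n` and letting `n → ∞`,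
the entropy term (at most `r`) disappears, and `φ_β/β → V` uniformly gives
`λ_{β_n}/β_n → max_μ ∫ (A(y,·) + V - V(y)) dμ` for every `y`. Hence this maximum is a constant
`c(V)` independent of `y`, and likewise for `V̄`. At a minimum point `y₀` of the continuous
function `V - V̄` the integrand `A(y₀,·) + V̄ - V̄(y₀)` lies pointwise below
`A(y₀,·) + V - V(y₀)`, so `c(V̄) ≤ c(V)`, and equality follows by symmetry.
-/

section SupremumOfFamily

variable {ι : Type*}

lemma sSup_setOf_exists_eq_iSup {α : Type*} (p : α → Prop) (f : α → ℝ) :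
    sSup {t | ∃ a, p a ∧ t = f a} = ⨆ a : Subtype p, f a := by
  rw [iSup]
  congr 1
  ext t
  simp [eq_comm]

lemma abs_ciSup_sub_ciSup_le [Nonempty ι] {f g : ι → ℝ} {ε : ℝ} (hg : BddAbove (Set.range g))
    (h : ∀ i, |f i - g i| ≤ ε) : |(⨆ i, f i) - ⨆ i, g i| ≤ ε := by
  have hf : BddAbove (Set.range f) := by
    refine ⟨(⨆ i, g i) + ε, ?_⟩
    rintro _ ⟨i, rfl⟩
    linarith [(abs_le.1 (h i)).2, le_ciSup hg i]
  refine abs_sub_le_iff.2 ⟨sub_le_iff_le_add'.2 (ciSup_le fun i => ?_),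
    sub_le_iff_le_add'.2 (ciSup_le fun i => ?_)⟩
  · linarith [(abs_le.1 (h i)).2, le_ciSup hg i]
  · linarith [(abs_le.1 (h i)).1, le_ciSup hf i]

lemma TendstoUniformly.tendsto_ciSup [Nonempty ι] {α : Type*} {l : Filter α}
    {F : α → ι → ℝ} {G : ι → ℝ} (h : TendstoUniformly F G l) (hG : BddAbove (Set.range G)) :
    Tendsto (fun n => ⨆ i, F n i) l (𝓝 (⨆ i, G i)) := by
  refine Metric.tendsto_nhds.2 fun ε hε => ?_
  filter_upwards [Metric.tendstoUniformly_iff.1 h (ε / 2) (half_pos hε)] with n hn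
  rw [Real.dist_eq]
  refine (abs_ciSup_sub_ciSup_le hG fun i => ?_).trans_lt (half_lt_self hε)
  rw [← Real.dist_eq, dist_comm]
  exact (hn i).le

end SupremumOfFamily

section IntegralsOnCompactSpace

variable {X : Type*} [MeasurableSpace X]

lemma abs_integral_le_of_abs_le {μ : Measure X} [IsProbabilityMeasure μ] {f : X → ℝ} {C : ℝ}
    (h : ∀ x, |f x| ≤ C) : |∫ x, f x ∂μ| ≤ C := by
  simpa using norm_integral_le_of_norm_le_const (μ := μ) (f := f) (C := C)
    (ae_of_all _ fun x => (Real.norm_eq_abs (f x)).trans_le (h x))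

lemma abs_integral_sub_integral_le {μ : Measure X} [IsProbabilityMeasure μ] {f g : X → ℝ}
    (hf : Integrable f μ) (hg : Integrable g μ) {ε : ℝ} (h : ∀ x, |f x - g x| ≤ ε) :
    |∫ x, f x ∂μ - ∫ x, g x ∂μ| ≤ ε := by
  rw [← integral_sub hf hg]
  exact abs_integral_le_of_abs_le h

variable [TopologicalSpace X] [CompactSpace X]

lemma Continuous.integrable_of_compactSpace [OpensMeasurableSpace X] {f : X → ℝ}
    (hf : Continuous f) (μ : Measure X) [IsFiniteMeasure μ] : Integrable f μ :=
  hf.integrable_of_hasCompactSupport (.of_compactSpace f)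

lemma Continuous.bddAbove_range_integral {f : X → ℝ} (hf : Continuous f) {κ : Type*}
    (P : κ → Measure X) [∀ k, IsProbabilityMeasure (P k)] :
    BddAbove (Set.range fun k => ∫ x, f x ∂P k) := by
  obtain ⟨C, hC⟩ := isCompact_univ.exists_bound_of_continuousOn hf.continuousOn
  refine ⟨C, ?_⟩
  rintro _ ⟨k, rfl⟩
  exact (le_abs_self _).trans (abs_integral_le_of_abs_le fun x => hC x (Set.mem_univ x))

lemma TendstoUniformly.tendstoUniformly_integral [OpensMeasurableSpace X] {κ : Type*}
    (P : κ → Measure X) [∀ k, IsProbabilityMeasure (P k)] {α : Type*} {l : Filter α} {f : α → X → ℝ} {g : X → ℝ}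
    (h : TendstoUniformly f g l) (hf : ∀ n, Continuous (f n)) (hg : Continuous g) :
    TendstoUniformly (fun n k => ∫ x, f n x ∂P k) (fun k => ∫ x, g x ∂P k) l := by
  refine Metric.tendstoUniformly_iff.2 fun ε hε => ?_
  filter_upwards [Metric.tendstoUniformly_iff.1 h (ε / 2) (half_pos hε)] with n hn k
  rw [Real.dist_eq]
  refine (abs_integral_sub_integral_le (hg.integrable_of_compactSpace _)
    ((hf n).integrable_of_compactSpace _) fun x => ?_).trans_lt (half_lt_self hε)
  rw [← Real.dist_eq]
  exact (hn x).le

end IntegralsOnCompactSpace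

section Subshift

instance : CompactSpace (Shift r M) := by
  refine isCompact_iff_compactSpace.1 (IsClosed.isCompact ?_)
  change IsClosed {x : ℕ → Fin r | ∀ j, M (x j) (x (j + 1)) = true}
  rw [Set.ofPred_forall]
  exact isClosed_iInter fun j =>
    (isClosed_discrete {p : Fin r × Fin r | M p.1 p.2 = true}).preimage
      (f := fun x : ℕ → Fin r => (x j, x (j + 1))) (by fun_prop)

lemma shiftDist_self {Λ : ℝ} (x : Shift r M) : shiftDist Λ x x = 0 := by
  simp [shiftDist]

lemma shiftDist_nonneg {Λ : ℝ} (hΛ : 0 ≤ Λ) (x y : Shift r M) : 0 ≤ shiftDist Λ x y := by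
  unfold shiftDist
  split
  · exact le_rfl
  · exact pow_nonneg hΛ _

lemma shiftDist_le_pow {Λ : ℝ} (hΛ₀ : 0 ≤ Λ) (hΛ₁ : Λ ≤ 1) {x y : Shift r M} {k : ℕ}
    (h : ∀ j < k, x.1 j = y.1 j) : shiftDist Λ x y ≤ Λ ^ k := by
  unfold shiftDist
  split
  · exact pow_nonneg hΛ₀ _
  · exact pow_le_pow_of_le_one hΛ₀ hΛ₁ (Nat.le_find_iff _ _ |>.2 fun m hm hne => hne (h m hm))

lemma LipBnd.continuous {Λ K : ℝ} (hΛ₀ : 0 ≤ Λ) (hΛ₁ : Λ < 1) {φ : Shift r M → ℝ}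
    (hφ : LipBnd Λ K φ) : Continuous φ := by
  refine continuous_iff_continuousAt.2 fun x => Metric.tendsto_nhds.2 fun ε hε => ?_
  obtain ⟨k, hk⟩ := exists_pow_lt_of_lt_one (div_pos hε (by positivity : (0 : ℝ) < |K| + 1)) hΛ₁
  have hcyl : ∀ᶠ y in 𝓝 x, ∀ j ∈ Finset.range k, y.1 j = x.1 j := by
    refine (Filter.eventually_all_finset _).2 fun j _ => tendsto_pure.1 ?_
    simpa [nhds_discrete] using ((continuous_apply j).comp continuous_subtype_val).tendsto x
  filter_upwards [hcyl] with y hy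
  have hd := shiftDist_le_pow hΛ₀ hΛ₁.le fun j hj => hy j (Finset.mem_range.2 hj)
  have hd₀ := shiftDist_nonneg hΛ₀ y x
  rw [Real.dist_eq]
  calc |φ y - φ x| ≤ K * shiftDist Λ y x := hφ y x
    _ ≤ (|K| + 1) * Λ ^ k := by gcongr; linarith [le_abs_self K]
    _ < ε := by rwa [lt_div_iff₀' (by positivity)] at hk

lemma IsLip.continuous {Λ : ℝ} (hΛ : Λ ∈ Set.Ioo (0 : ℝ) 1) {φ : Shift r M → ℝ}
    (hφ : IsLip Λ φ) : Continuous φ :=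
  hφ.elim fun _ hK => hK.continuous hΛ.1.le hΛ.2

lemma IsLip2.continuous_apply {Λ : ℝ} (hΛ : Λ ∈ Set.Ioo (0 : ℝ) 1)
    {A : Shift r M → Shift r M → ℝ} (hA : IsLip2 Λ A) (y : Shift r M) : Continuous (A y) := by
  obtain ⟨K, hK⟩ := hA
  refine LipBnd.continuous (K := K) hΛ.1.le hΛ.2 fun x x' => ?_
  simpa [shiftDist_self, max_eq_right (shiftDist_nonneg hΛ.1.le x x')] using hK y x y x'

end Subshift

section InvariantMeasures

abbrev InvMeasure (r : ℕ) (M : Fin r → Fin r → Bool) : Type :=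
  {μ : Measure (Shift r M) // InvProb μ}

instance (μ : InvMeasure r M) : IsProbabilityMeasure μ.1 := μ.2.1

lemma maxErg_eq_iSup (B : Shift r M → ℝ) :
    maxErg B = ⨆ μ : InvMeasure r M, ∫ x, B x ∂μ.1 :=
  sSup_setOf_exists_eq_iSup _ _

lemma Gplus_eq_iSup (A : Shift r M → Shift r M → ℝ) (φ : Shift r M → ℝ) (y : Shift r M) :
    Gplus A φ y = ⨆ μ : InvMeasure r M, (∫ x, (A y x + φ x) ∂μ.1 + entropy μ.1) :=
  sSup_setOf_exists_eq_iSup _ _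

lemma cylEnt_nonneg (μ : Measure (Shift r M)) [IsProbabilityMeasure μ] (n : ℕ) :
    0 ≤ cylEnt μ n :=
  Finset.sum_nonneg fun _ _ => Real.negMulLog_nonneg measureReal_nonneg measureReal_le_one

lemma entropy_nonneg (μ : Measure (Shift r M)) [IsProbabilityMeasure μ] : 0 ≤ entropy μ :=
  Real.iInf_nonneg fun _ => div_nonneg (cylEnt_nonneg μ _) (by positivity)

lemma entropy_le (μ : Measure (Shift r M)) [IsProbabilityMeasure μ] : entropy μ ≤ r := by
  have hbdd : BddBelow (Set.range fun n : ℕ => cylEnt μ (n + 1) / (n + 1)) :=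
    ⟨0, by rintro _ ⟨n, rfl⟩; exact div_nonneg (cylEnt_nonneg μ _) (by positivity)⟩
  calc entropy μ ≤ cylEnt μ 1 := by simpa [entropy] using ciInf_le hbdd 0
    _ ≤ ∑ _w : Fin 1 → Fin r, (1 : ℝ) := Finset.sum_le_sum fun _ _ =>
        (Real.negMulLog_le_one_sub_self ENNReal.toReal_nonneg).trans (by simp)
    _ = r := by simp

lemma maxErg_mono {B B' : Shift r M → ℝ} (hB : Continuous B) (hB' : Continuous B')
    (h : ∀ x, B x ≤ B' x) : maxErg B ≤ maxErg B' := by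
  rw [maxErg_eq_iSup, maxErg_eq_iSup]
  exact ciSup_mono (hB'.bddAbove_range_integral _) fun μ =>
    integral_mono (hB.integrable_of_compactSpace _) (hB'.integrable_of_compactSpace _) h

end InvariantMeasures

section EffectivePotentials

variable {A : Shift r M → Shift r M → ℝ} {y : Shift r M} {b : ℕ → ℝ}
  {φ : ℕ → Shift r M → ℝ} {lam : ℕ → ℝ} {V : Shift r M → ℝ}

lemma div_eq_iSup_of_Gplus_eq {n : ℕ} (hβ : 0 < b n)
    (hG : Gplus (fun y x => b n * A y x) (φ n) y = φ n y + lam n) :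
    lam n / b n = (⨆ μ : InvMeasure r M,
      (∫ x, (A y x + φ n x / b n) ∂μ.1 + entropy μ.1 / b n)) - φ n y / b n := by
  have hscale : ∀ μ : InvMeasure r M,
      (b n)⁻¹ * (∫ x, (b n * A y x + φ n x) ∂μ.1 + entropy μ.1) =
        ∫ x, (A y x + φ n x / b n) ∂μ.1 + entropy μ.1 / b n := by
    intro μ
    have hint : ∫ x, (b n * A y x + φ n x) ∂μ.1 = b n * ∫ x, (A y x + φ n x / b n) ∂μ.1 := by
      rw [← integral_const_mul]
      congr 1
      ext x
      field_simp
    rw [hint]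
    field_simp
  rw [Gplus_eq_iSup] at hG
  rw [← funext hscale, ← Real.mul_iSup_of_nonneg (inv_nonneg.2 hβ.le), hG]
  field_simp
  ring

lemma tendstoUniformly_entropy_div (hbtop : Tendsto b atTop atTop) :
    TendstoUniformly (fun n (μ : InvMeasure r M) => entropy μ.1 / b n) 0 atTop := by
  refine Metric.tendstoUniformly_iff.2 fun ε hε => ?_
  filter_upwards [hbtop.eventually_gt_atTop (r / ε)] with n hn μ
  have hb : 0 < b n := (div_nonneg (Nat.cast_nonneg r) hε.le).trans_lt hn
  rw [Pi.zero_apply, dist_zero_left, Real.norm_eq_abs,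
    abs_of_nonneg (div_nonneg (entropy_nonneg _) hb.le), div_lt_iff₀ hb]
  rw [div_lt_iff₀ hε] at hn
  linarith [entropy_le μ.1]

theorem tendsto_div_maxErg [Nonempty (InvMeasure r M)] (hA : Continuous (A y))
    (hb : ∀ n, 0 < b n) (hbtop : Tendsto b atTop atTop) (hφ : ∀ n, Continuous (φ n))
    (hG : ∀ n, Gplus (fun y x => b n * A y x) (φ n) y = φ n y + lam n)
    (hV : TendstoUniformly (fun n x => φ n x / b n) V atTop) :
    Tendsto (fun n => lam n / b n) atTop (𝓝 (maxErg fun x => A y x + V x - V y)) := by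
  have hVc : Continuous V := hV.continuous (.of_forall fun n => (hφ n).div_const _)
  have hAVc : Continuous fun x => A y x + V x := hA.add hVc
  have hAV : TendstoUniformly (fun n x => A y x + φ n x / b n) (fun x => A y x + V x) atTop :=
    Metric.tendstoUniformly_iff.2 fun ε hε =>
      (Metric.tendstoUniformly_iff.1 hV ε hε).mono fun n hn x => by
        simpa only [dist_add_left] using hn x
  have hunif : TendstoUniformly
      (fun n (μ : InvMeasure r M) => ∫ x, (A y x + φ n x / b n) ∂μ.1 + entropy μ.1 / b n)
      (fun μ => ∫ x, (A y x + V x) ∂μ.1) atTop := by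
    have h := (hAV.tendstoUniformly_integral (fun μ : InvMeasure r M => μ.1)
      (fun n => hA.add ((hφ n).div_const _)) hAVc).add (tendstoUniformly_entropy_div hbtop)
    rwa [add_zero] at h
  have hsup := hunif.tendsto_ciSup (hAVc.bddAbove_range_integral _)
  have hlimit : maxErg (fun x => A y x + V x - V y) = (⨆ μ : InvMeasure r M,
      ∫ x, (A y x + V x) ∂μ.1) - V y := by
    rw [maxErg_eq_iSup, ciSup_sub (hAVc.bddAbove_range_integral _)]
    congr 1
    ext μ
    rw [integral_sub (hAVc.integrable_of_compactSpace _) (integrable_const _),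
      integral_const, probReal_univ, one_smul]
  rw [hlimit]
  simp_rw [div_eq_iSup_of_Gplus_eq (hb _) (hG _)]
  exact hsup.sub (hV.tendsto_at y)

theorem maxErg_eq_maxErg_of_Gplus_eq [Nonempty (InvMeasure r M)] (hA : ∀ y, Continuous (A y))
    (hb : ∀ n, 0 < b n) (hbtop : Tendsto b atTop atTop) (hφ : ∀ n, Continuous (φ n))
    (hG : ∀ n y, Gplus (fun y x => b n * A y x) (φ n) y = φ n y + lam n)
    (hV : TendstoUniformly (fun n x => φ n x / b n) V atTop) (y y' : Shift r M) :
    maxErg (fun x => A y x + V x - V y) = maxErg (fun x => A y' x + V x - V y') :=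
  tendsto_nhds_unique (tendsto_div_maxErg (hA y) hb hbtop hφ (fun n => hG n y) hV)
    (tendsto_div_maxErg (hA y') hb hbtop hφ (fun n => hG n y') hV)

theorem maxErg_le_maxErg_of_forall_eq (hA : ∀ y, Continuous (A y)) {W : Shift r M → ℝ}
    (hV : Continuous V) (hW : Continuous W)
    (hcV : ∀ y y', maxErg (fun x => A y x + V x - V y) = maxErg (fun x => A y' x + V x - V y'))
    (hcW : ∀ y y', maxErg (fun x => A y x + W x - W y) = maxErg (fun x => A y' x + W x - W y'))
    (y : Shift r M) :
    maxErg (fun x => A y x + W x - W y) ≤ maxErg (fun x => A y x + V x - V y) := by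
  obtain ⟨y₀, -, hy₀⟩ :=
    isCompact_univ.exists_isMinOn ⟨y, Set.mem_univ y⟩ (hV.sub hW).continuousOn
  rw [hcW y y₀, hcV y y₀]
  refine maxErg_mono (by fun_prop) (by fun_prop) fun x => ?_
  have hx : V y₀ - W y₀ ≤ V x - W x := hy₀ (Set.mem_univ x)
  linarith

end EffectivePotentials

theorem limit_max_independent_of_limit_function_general
    (r : ℕ) (M : Fin r → Fin r → Bool)
    (Λ : ℝ) (hΛ : Λ ∈ Set.Ioo (0 : ℝ) 1)
    (A : Shift r M → Shift r M → ℝ) (hA : IsLip2 Λ A)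
    (φ : ℝ → Shift r M → ℝ) (lam : ℝ → ℝ)
    (heff : ∀ β > (0 : ℝ), IsLip Λ (φ β) ∧
      ∀ y, Gplus (fun y x => β * A y x) (φ β) y = φ β y + lam β)
    (b bbar : ℕ → ℝ) (hb : ∀ n, 0 < b n) (hbbar : ∀ n, 0 < bbar n)
    (hbtop : Filter.Tendsto b Filter.atTop Filter.atTop)
    (hbbartop : Filter.Tendsto bbar Filter.atTop Filter.atTop)
    (V Vbar : Shift r M → ℝ)
    (hV : TendstoUniformly (fun n x => φ (b n) x / b n) V Filter.atTop)
    (hVbar : TendstoUniformly (fun n x => φ (bbar n) x / bbar n) Vbar Filter.atTop) :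
    ∀ y : Shift r M,
      sSup {t : ℝ | ∃ μ : Measure (Shift r M), InvProb μ ∧
          t = ∫ x, (A y x + V x - V y) ∂μ} =
      sSup {t : ℝ | ∃ μ : Measure (Shift r M), InvProb μ ∧
          t = ∫ x, (A y x + Vbar x - Vbar y) ∂μ} := by
  intro y
  change maxErg _ = maxErg _
  rcases isEmpty_or_nonempty (InvMeasure r M) with hM | hM
  -- with no invariant measure both sides are the junk value `sSup ∅ = 0`
  · simp only [maxErg_eq_iSup, Real.iSup_of_isEmpty]
  have hAc : ∀ y, Continuous (A y) := hA.continuous_apply hΛ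
  have hφc : ∀ {c : ℕ → ℝ}, (∀ n, 0 < c n) → ∀ n, Continuous (φ (c n)) :=
    fun hc n => (heff _ (hc n)).1.continuous hΛ
  have hcV := maxErg_eq_maxErg_of_Gplus_eq hAc hb hbtop (hφc hb) (fun n => (heff _ (hb n)).2) hV
  have hcVbar := maxErg_eq_maxErg_of_Gplus_eq hAc hbbar hbbartop (hφc hbbar)
    (fun n => (heff _ (hbbar n)).2) hVbar
  have hVc := hV.continuous (.of_forall fun n => (hφc hb n).div_const _)
  have hVbarc := hVbar.continuous (.of_forall fun n => (hφc hbbar n).div_const _)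
  exact le_antisymm (maxErg_le_maxErg_of_forall_eq hAc hVbarc hVc hcVbar hcV y)
    (maxErg_le_maxErg_of_forall_eq hAc hVc hVbarc hcV hcVbar y)

/-- If `β_n → ∞` and `β̄_n → ∞` are sequences with
`φ_{β_n}/β_n → V` and `φ_{β̄_n}/β̄_n → V̄` uniformly (`φ_β` being the forward effective
potential for `βA`), then for every point `y`,
`max_{μ ∈ M_σ} ∫ (A(y,x) + V(x) − V(y)) dμ = max_{μ ∈ M_σ} ∫ (A(y,x) + V̄(x) − V̄(y)) dμ`. -/
theorem limit_max_independent_of_limit_function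
    (r : ℕ) (hr : 2 ≤ r) (M : Fin r → Fin r → Bool)
    (hSym : ∀ i j, M i j = M j i) (hIrr : Irred M)
    (Λ : ℝ) (hΛ : Λ ∈ Set.Ioo (0 : ℝ) 1)
    (A : Shift r M → Shift r M → ℝ) (hA : IsLip2 Λ A)
    (φ : ℝ → Shift r M → ℝ) (lam : ℝ → ℝ)
    (heff : ∀ β > (0 : ℝ), IsLip Λ (φ β) ∧
      ∀ y, Gplus (fun y x => β * A y x) (φ β) y = φ β y + lam β)
    (b bbar : ℕ → ℝ) (hb : ∀ n, 0 < b n) (hbbar : ∀ n, 0 < bbar n)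
    (hbtop : Filter.Tendsto b Filter.atTop Filter.atTop)
    (hbbartop : Filter.Tendsto bbar Filter.atTop Filter.atTop)
    (V Vbar : Shift r M → ℝ)
    (hV : TendstoUniformly (fun n x => φ (b n) x / b n) V Filter.atTop)
    (hVbar : TendstoUniformly (fun n x => φ (bbar n) x / bbar n) Vbar Filter.atTop) :
    ∀ y : Shift r M,
      sSup {t : ℝ | ∃ μ : Measure (Shift r M), InvProb μ ∧
          t = ∫ x, (A y x + V x - V y) ∂μ} =
      sSup {t : ℝ | ∃ μ : Measure (Shift r M), InvProb μ ∧
          t = ∫ x, (A y x + Vbar x - Vbar y) ∂μ} :=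
  limit_max_independent_of_limit_function_general r M Λ hΛ A hA φ lam heff b bbar hb hbbar hbtop
    hbbartop V Vbar hV hVbar
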